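/- arXiv:2202.06522 — 6 statements merged into one kernel-verified Lean document; each statement's English description precedes it below -/
import Mathlib

section
/- Let S be a semigroup of Hénon maps of C^2 generated by a finite set of compositions of generalized Hénon maps, each of degree at least 2. Then S has a unique minimal generating set G0 consisting of Hénon maps: every generating set G of S contains G0. -/
open Filter Metric Set

noncomputable section

/-- A generalized Hénon map of ℂ²: `H (x,y) = (y, p(y) - a x)` with `a ≠ 0` and
`deg p = d ≥ 2`. -/
def IsGenHenonDeg (h : ℂ × ℂ → ℂ × ℂ) (d : ℕ) : Prop :=
  ∃ (a : ℂ) (p : Polynomial ℂ), a ≠ 0 ∧ 2 ≤ p.natDegree ∧ p.natDegree = d ∧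
    ∀ x y : ℂ, h (x, y) = (y, p.eval y - a * x)

/-- A Hénon map of degree `d`: a finite (nonempty) composition of generalized
Hénon maps, `d` being the product of the degrees of the factors. -/
def IsHenonDeg (h : ℂ × ℂ → ℂ × ℂ) (d : ℕ) : Prop :=
  ∃ l : List ((ℂ × ℂ → ℂ × ℂ) × ℕ), l ≠ [] ∧
    (∀ gd ∈ l, IsGenHenonDeg gd.1 gd.2) ∧
    h = (l.map Prod.fst).foldr (· ∘ ·) id ∧ d = (l.map Prod.snd).prod

def IsHenon (h : ℂ × ℂ → ℂ × ℂ) : Prop := ∃ d, IsHenonDeg h d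

/-! The proof is purely semigroup-theoretic once Hénon maps carry a well-defined degree that
is multiplicative and at least `2`. The generating set is the set `G0` of indecomposable
elements of `S`, those that are not a product of two elements of `S`. Any generating set must
contain them, since an element of the closure of `G` outside `G` is a product of two elements
of the closure. Conversely, each decomposable element splits into factors of strictly smaller
degree, so induction on the degree writes it as a product of indecomposables.

The degree is well defined because the image of the line `{x = 0}` under a Hénon map of
degree `d` is a polynomial curve `y ↦ (A y, B y)` with `deg A < deg B = d`. -/

namespace Subsemigroup

variable {M : Type*} [Mul M]

def indecomposables (T : Subsemigroup M) : Set M :=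
  {s | s ∈ T ∧ ∀ a ∈ T, ∀ b ∈ T, a * b ≠ s}

lemma indecomposables_subset (T : Subsemigroup M) : T.indecomposables ⊆ T :=
  fun _ hs => hs.1

lemma mem_or_exists_mul_eq_of_mem_closure {G : Set M} {s : M} (hs : s ∈ closure G) :
    s ∈ G ∨ ∃ a ∈ closure G, ∃ b ∈ closure G, a * b = s := by
  induction hs using closure_induction with
  | mem x hx => exact Or.inl hx
  | mul x y hx hy _ _ => exact Or.inr ⟨x, hx, y, hy, rfl⟩

lemma indecomposables_closure_subset (G : Set M) : (closure G).indecomposables ⊆ G := by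
  rintro s ⟨hs, hirr⟩
  rcases mem_or_exists_mul_eq_of_mem_closure hs with hG | ⟨a, ha, b, hb, hab⟩
  exacts [hG, absurd hab (hirr a ha b hb)]

lemma closure_indecomposables_eq (T : Subsemigroup M) (deg : M → ℕ)
    (hdeg : ∀ a ∈ T, ∀ b ∈ T, deg a < deg (a * b) ∧ deg b < deg (a * b)) :
    closure T.indecomposables = T := by
  refine le_antisymm (closure_le.mpr T.indecomposables_subset) fun s hs => ?_
  induction hd : deg s using Nat.strong_induction_on generalizing s with
  | _ d ih =>
    by_cases hdec : ∃ a ∈ T, ∃ b ∈ T, a * b = s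
    · obtain ⟨a, ha, b, hb, rfl⟩ := hdec
      obtain ⟨hda, hdb⟩ := hdeg a ha b hb
      exact mul_mem (ih _ (hd ▸ hda) _ ha rfl) (ih _ (hd ▸ hdb) _ hb rfl)
    · push Not at hdec
      exact subset_closure ⟨hs, hdec⟩

end Subsemigroup

lemma List.foldr_comp_id_append {α : Type*} (l₁ l₂ : List (α → α)) :
    (l₁ ++ l₂).foldr (· ∘ ·) id = l₁.foldr (· ∘ ·) id ∘ l₂.foldr (· ∘ ·) id := by
  induction l₁ with
  | nil => rfl
  | cons f t ih => simp only [List.cons_append, List.foldr_cons, ih, Function.comp_assoc]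

open Polynomial

lemma IsGenHenonDeg.exists_apply_polynomial_curve {h : ℂ × ℂ → ℂ × ℂ} {e : ℕ}
    (hh : IsGenHenonDeg h e) {A B : ℂ[X]} (hAB : A.natDegree < B.natDegree) :
    ∃ A' B' : ℂ[X], A'.natDegree < B'.natDegree ∧ B'.natDegree = e * B.natDegree ∧
      ∀ y, h (A.eval y, B.eval y) = (A'.eval y, B'.eval y) := by
  obtain ⟨a, p, ha, hp2, rfl, hh⟩ := hh
  have hcomp : (p.comp B).natDegree = p.natDegree * B.natDegree := natDegree_comp
  have hlt : (C a * A).natDegree < (p.comp B).natDegree := by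
    rw [natDegree_C_mul ha, hcomp]
    exact hAB.trans_le (Nat.le_mul_of_pos_left _ (by omega))
  have hdeg : (p.comp B - C a * A).natDegree = p.natDegree * B.natDegree := by
    rw [natDegree_sub_eq_left_of_natDegree_lt hlt, hcomp]
  refine ⟨B, p.comp B - C a * A, ?_, hdeg, fun y => by simp [hh]⟩
  rw [hdeg]
  nlinarith

lemma IsHenonDeg.exists_snd_apply_zero_eq_eval {h : ℂ × ℂ → ℂ × ℂ} {d : ℕ}
    (hh : IsHenonDeg h d) : ∃ B : ℂ[X], B.natDegree = d ∧ ∀ y, (h (0, y)).2 = B.eval y := by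
  obtain ⟨l, -, hl, rfl, rfl⟩ := hh
  suffices ∀ A B : ℂ[X], A.natDegree < B.natDegree →
      ∃ A' B' : ℂ[X], A'.natDegree < B'.natDegree ∧
        B'.natDegree = (l.map Prod.snd).prod * B.natDegree ∧
        ∀ y, (l.map Prod.fst).foldr (· ∘ ·) id (A.eval y, B.eval y) = (A'.eval y, B'.eval y) by
    obtain ⟨_, B', -, hB', hevalB⟩ := this 0 X (by simp)
    exact ⟨B', by simpa using hB', fun y => by simpa using congrArg Prod.snd (hevalB y)⟩
  induction l with
  | nil => exact fun A B hAB => ⟨A, B, hAB, by simp, fun _ => rfl⟩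
  | cons g t ih =>
    intro A B hAB
    obtain ⟨A₁, B₁, h₁, hB₁, hevalB₁⟩ := ih (fun gd hgd => hl gd (.tail _ hgd)) A B hAB
    obtain ⟨A₂, B₂, h₂, hB₂, hevalB₂⟩ :=
      (hl g List.mem_cons_self).exists_apply_polynomial_curve h₁
    refine ⟨A₂, B₂, h₂, by simp [hB₂, hB₁, mul_assoc], fun y => ?_⟩
    simp only [List.map_cons, List.foldr_cons, Function.comp_apply, hevalB₁, hevalB₂]

lemma IsHenonDeg.unique {h : ℂ × ℂ → ℂ × ℂ} {d d' : ℕ}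
    (hd : IsHenonDeg h d) (hd' : IsHenonDeg h d') : d = d' := by
  obtain ⟨B, rfl, hB⟩ := hd.exists_snd_apply_zero_eq_eval
  obtain ⟨B', rfl, hB'⟩ := hd'.exists_snd_apply_zero_eq_eval
  rw [Polynomial.funext fun y => (hB y).symm.trans (hB' y)]

lemma IsHenonDeg.two_le {h : ℂ × ℂ → ℂ × ℂ} {d : ℕ} (hh : IsHenonDeg h d) : 2 ≤ d := by
  obtain ⟨l, hne, hl, -, rfl⟩ := hh
  have hfactor : ∀ e ∈ l.map Prod.snd, 2 ≤ e := by
    simp only [List.mem_map]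
    rintro _ ⟨gd, hgd, rfl⟩
    obtain ⟨a, p, -, hp, hpd, -⟩ := hl gd hgd
    exact hpd ▸ hp
  calc 2 ≤ 2 ^ (l.map Prod.snd).length :=
        Nat.le_self_pow (by simpa [List.length_eq_zero_iff] using hne) 2
    _ ≤ (l.map Prod.snd).prod := List.pow_card_le_prod _ _ hfactor

lemma IsHenonDeg.comp {f g : ℂ × ℂ → ℂ × ℂ} {d e : ℕ}
    (hf : IsHenonDeg f d) (hg : IsHenonDeg g e) : IsHenonDeg (f ∘ g) (d * e) := by
  obtain ⟨l₁, hne, hl₁, rfl, rfl⟩ := hf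
  obtain ⟨l₂, -, hl₂, rfl, rfl⟩ := hg
  refine ⟨l₁ ++ l₂, by simp [hne], fun gd hgd => ?_, ?_, ?_⟩
  · rcases List.mem_append.mp hgd with h | h
    exacts [hl₁ gd h, hl₂ gd h]
  · rw [List.map_append, List.foldr_comp_id_append]
  · rw [List.map_append, List.prod_append]

def henonSubsemigroup : Subsemigroup (Function.End (ℂ × ℂ)) where
  carrier := {f | IsHenon f}
  mul_mem' := fun ⟨d, hd⟩ ⟨e, he⟩ => ⟨d * e, hd.comp he⟩

def henonDegree (h : ℂ × ℂ → ℂ × ℂ) : ℕ := sInf {d | IsHenonDeg h d}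

lemma IsHenonDeg.henonDegree_eq {h : ℂ × ℂ → ℂ × ℂ} {d : ℕ} (hd : IsHenonDeg h d) :
    henonDegree h = d := by
  have hmem : IsHenonDeg h (henonDegree h) := Nat.sInf_mem (s := {d | IsHenonDeg h d}) ⟨d, hd⟩
  exact hmem.unique hd

lemma henonDegree_lt_mul {f g : Function.End (ℂ × ℂ)}
    (hf : f ∈ henonSubsemigroup) (hg : g ∈ henonSubsemigroup) :
    henonDegree f < henonDegree (f * g) ∧ henonDegree g < henonDegree (f * g) := by
  obtain ⟨d, hd⟩ := hf
  obtain ⟨e, he⟩ := hg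
  have hfg : IsHenonDeg (f * g : Function.End (ℂ × ℂ)) (d * e) := hd.comp he
  rw [hd.henonDegree_eq, he.henonDegree_eq, hfg.henonDegree_eq]
  have := hd.two_le
  have := he.two_le
  constructor <;> nlinarith

theorem unique_minimal_generating_set_general (n : ℕ)
    (H : Fin n → Function.End (ℂ × ℂ))
    (hH : ∀ i, IsHenon (H i : ℂ × ℂ → ℂ × ℂ)) :
    ∃! G0 : Set (Function.End (ℂ × ℂ)),
      (∀ g ∈ G0, IsHenon (g : ℂ × ℂ → ℂ × ℂ)) ∧
      Subsemigroup.closure G0 = Subsemigroup.closure (Set.range H) ∧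
      ∀ G : Set (Function.End (ℂ × ℂ)),
        Subsemigroup.closure G = Subsemigroup.closure (Set.range H) → G0 ⊆ G := by
  set S := Subsemigroup.closure (Set.range H)
  have hS : S ≤ henonSubsemigroup := Subsemigroup.closure_le.mpr (Set.range_subset_iff.mpr hH)
  have hgen : Subsemigroup.closure S.indecomposables = S :=
    S.closure_indecomposables_eq henonDegree fun a ha b hb => henonDegree_lt_mul (hS ha) (hS hb)
  have hmin : ∀ G, Subsemigroup.closure G = S → S.indecomposables ⊆ G :=
    fun G hG => hG ▸ Subsemigroup.indecomposables_closure_subset G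
  refine ⟨S.indecomposables, ⟨fun g hg => hS (S.indecomposables_subset hg), hgen, hmin⟩, ?_⟩
  rintro G0 ⟨-, hG0, hminG0⟩
  exact (hminG0 _ hgen).antisymm (hmin G0 hG0)

/-- The semigroup (under composition) generated by a finite family of
Hénon maps has a unique minimal generating set `G0` consisting of Hénon maps:
`G0` generates, and every generating set of the semigroup contains `G0`. -/
theorem unique_minimal_generating_set (n : ℕ) (hn : 0 < n)
    (H : Fin n → Function.End (ℂ × ℂ))
    (hH : ∀ i, IsHenon (H i : ℂ × ℂ → ℂ × ℂ)) :
    ∃! G0 : Set (Function.End (ℂ × ℂ)),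
      (∀ g ∈ G0, IsHenon (g : ℂ × ℂ → ℂ × ℂ)) ∧
      Subsemigroup.closure G0 = Subsemigroup.closure (Set.range H) ∧
      ∀ G : Set (Function.End (ℂ × ℂ)),
        Subsemigroup.closure G = Subsemigroup.closure (Set.range H) → G0 ⊆ G :=
  unique_minimal_generating_set_general n H hH
end
end

section
/- Let S be a semigroup generated by finitely many Hénon maps H_1,...,H_{n0}. Then there exists R_S > 0 such that for every R > R_S and every h ∈ S, the closure of h(V_R^+) is contained in V_R^+ and the closure of h^{-1}(V_R^-) is contained in V_R^-. Moreover, for any sequence h_k ∈ G_k (elements of word length k), there is a sequence R_k → ∞ with h_k(V_R^+) ∩ V_{R_k} = ∅ and h_k^{-1}(V_R^-) ∩ V_{R_k} = ∅. -/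
open Filter Metric Set Bornology

noncomputable section

/-- The polydisk `V_R = {max(|x|,|y|) ≤ R}`. -/
def VR (R : ℝ) : Set (ℂ × ℂ) := {z | max ‖z.1‖ ‖z.2‖ ≤ R}

/-- `V_R^+ = {|y| ≥ max(|x|, R)}`. -/
def VRp (R : ℝ) : Set (ℂ × ℂ) := {z | max ‖z.1‖ R ≤ ‖z.2‖}

/-- `V_R^- = {|x| ≥ max(|y|, R)}`. -/
def VRm (R : ℝ) : Set (ℂ × ℂ) := {z | max ‖z.2‖ R ≤ ‖z.1‖}

/-- The element of the semigroup given by the word `w`: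
`H_{w 0} ∘ H_{w 1} ∘ ⋯ ∘ H_{w (k-1)}`. -/
def wordProd {n : ℕ} (H : Fin n → Equiv.Perm (ℂ × ℂ)) {k : ℕ}
    (w : Fin k → Fin n) : Equiv.Perm (ℂ × ℂ) :=
  (List.ofFn fun j => H (w j)).prod

/-! For all large `R`, each generator `H` maps `V_R^+` into itself at least doubling `|y|`,
and `H⁻¹` maps `V_R^-` into itself at least doubling `|x|`: for a factor
`(x, y) ↦ (y, p(y) - a x)`, once `|y| ≥ R` the term `p(y)` of degree `≥ 2` dominates both
`a x` and `y`. These properties are stable under composition, so a word of length `k + 1`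
multiplies the relevant coordinate by `2^(k+1)` and pushes `V_R^±` out of the polydisk
`V_{2^k R}`. -/

open Polynomial

theorem mem_VRp {R : ℝ} {z : ℂ × ℂ} :
    z ∈ VRp R ↔ ‖z.1‖ ≤ ‖z.2‖ ∧ R ≤ ‖z.2‖ :=
  max_le_iff (a := ‖z.1‖)

theorem mem_VRm {R : ℝ} {z : ℂ × ℂ} :
    z ∈ VRm R ↔ ‖z.2‖ ≤ ‖z.1‖ ∧ R ≤ ‖z.1‖ :=
  max_le_iff (a := ‖z.2‖)

theorem mem_VR {R : ℝ} {z : ℂ × ℂ} : z ∈ VR R ↔ ‖z.1‖ ≤ R ∧ ‖z.2‖ ≤ R :=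
  max_le_iff (a := ‖z.1‖)

theorem isClosed_VRp (R : ℝ) : IsClosed (VRp R) :=
  isClosed_le (continuous_fst.norm.max continuous_const) continuous_snd.norm

theorem isClosed_VRm (R : ℝ) : IsClosed (VRm R) :=
  isClosed_le (continuous_snd.norm.max continuous_const) continuous_fst.norm

theorem Polynomial.eventually_mul_norm_le_norm_eval {𝕜 : Type*} [NormedField 𝕜] {p : 𝕜[X]}
    (hp : 2 ≤ p.natDegree) (C : ℝ) : ∀ᶠ y in cobounded 𝕜, C * ‖y‖ ≤ ‖p.eval y‖ := by
  have hdivX : 0 < p.divX.degree := by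
    rw [← natDegree_pos_iff_degree_pos, natDegree_divX_eq_natDegree_tsub_one]
    omega
  have hdivX_large := p.divX.tendsto_norm_atTop hdivX tendsto_norm_cobounded_atTop
  filter_upwards [hdivX_large.eventually_ge_atTop (C + 1),
    tendsto_norm_cobounded_atTop.eventually_ge_atTop ‖p.coeff 0‖] with y hq hy
  have hp_eval : p.eval y = p.divX.eval y * y + p.coeff 0 := by
    conv_lhs => rw [← divX_mul_X_add p]
    simp
  calc C * ‖y‖ ≤ (C + 1) * ‖y‖ - ‖p.coeff 0‖ := by linarith
    _ ≤ ‖p.divX.eval y‖ * ‖y‖ - ‖p.coeff 0‖ := by gcongr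
    _ ≤ ‖p.eval y‖ := by
      rw [hp_eval, ← norm_mul]
      exact norm_sub_le_norm_add _ _

/-- The second field says that `f⁻¹` maps `V_R^-` into itself multiplying `|x|` by at least
`c`, phrased without inverting `f`. -/
structure IsFiltrationMap (c R : ℝ) (f : ℂ × ℂ → ℂ × ℂ) : Prop where
  mapsTo_VRp : ∀ z ∈ VRp R, f z ∈ VRp R ∧ c * ‖z.2‖ ≤ ‖(f z).2‖
  mem_VRm_of_apply_mem : ∀ z, f z ∈ VRm R → z ∈ VRm R ∧ c * ‖(f z).1‖ ≤ ‖z.1‖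

namespace IsFiltrationMap

variable {c c' R : ℝ} {f g : ℂ × ℂ → ℂ × ℂ}

theorem id : IsFiltrationMap 1 R id :=
  ⟨fun z hz => ⟨hz, by simp⟩, fun z hz => ⟨hz, by simp⟩⟩

theorem mono (hf : IsFiltrationMap c R f) (hc : c' ≤ c) : IsFiltrationMap c' R f where
  mapsTo_VRp z hz := by
    obtain ⟨hfz, hexp⟩ := hf.mapsTo_VRp z hz
    exact ⟨hfz, by nlinarith [norm_nonneg z.2]⟩
  mem_VRm_of_apply_mem z hz := by
    obtain ⟨hz', hexp⟩ := hf.mem_VRm_of_apply_mem z hz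
    exact ⟨hz', by nlinarith [norm_nonneg (f z).1]⟩

theorem comp (hf : IsFiltrationMap c R f) (hg : IsFiltrationMap c' R g) (hc : 0 ≤ c)
    (hc' : 0 ≤ c') : IsFiltrationMap (c * c') R (f ∘ g) where
  mapsTo_VRp z hz := by
    obtain ⟨hgz, hg_exp⟩ := hg.mapsTo_VRp z hz
    obtain ⟨hfgz, hf_exp⟩ := hf.mapsTo_VRp (g z) hgz
    refine ⟨hfgz, ?_⟩
    calc c * c' * ‖z.2‖ = c * (c' * ‖z.2‖) := mul_assoc ..
      _ ≤ c * ‖(g z).2‖ := by gcongr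
      _ ≤ ‖(f (g z)).2‖ := hf_exp
  mem_VRm_of_apply_mem z hz := by
    obtain ⟨hgz, hf_exp⟩ := hf.mem_VRm_of_apply_mem (g z) hz
    obtain ⟨hz', hg_exp⟩ := hg.mem_VRm_of_apply_mem z hgz
    refine ⟨hz', ?_⟩
    calc c * c' * ‖(f (g z)).1‖ = c' * (c * ‖(f (g z)).1‖) := by ring
      _ ≤ c' * ‖(g z).1‖ := by gcongr
      _ ≤ ‖z.1‖ := hg_exp

theorem foldr_comp (hc : 0 ≤ c) :
    ∀ {l : List (ℂ × ℂ → ℂ × ℂ)}, (∀ f ∈ l, IsFiltrationMap c R f) →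
      IsFiltrationMap (c ^ l.length) R (l.foldr (· ∘ ·) _root_.id)
  | [], _ => by simpa using IsFiltrationMap.id
  | f :: l, hl => by
    rw [List.foldr_cons, List.length_cons, pow_succ']
    exact (hl f List.mem_cons_self).comp
      (foldr_comp hc fun g hg => hl g (List.mem_cons_of_mem _ hg)) hc (by positivity)

theorem list_prod (hc : 0 ≤ c) {l : List (Equiv.Perm (ℂ × ℂ))}
    (hl : ∀ σ ∈ l, IsFiltrationMap c R σ) : IsFiltrationMap (c ^ l.length) R ⇑l.prod := by
  have hprod (l : List (Equiv.Perm (ℂ × ℂ))) :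
      ⇑l.prod = (l.map (⇑)).foldr (· ∘ ·) _root_.id := by
    induction l with
    | nil => rfl
    | cons σ l ih => simp [ih]
  simpa [hprod] using foldr_comp hc (l := l.map (⇑)) (by simpa using hl)

theorem mapsTo (hf : IsFiltrationMap c R f) : MapsTo f (VRp R) (VRp R) :=
  fun z hz => (hf.mapsTo_VRp z hz).1

theorem perm_inv_apply_mem_VRm {σ : Equiv.Perm (ℂ × ℂ)} (hσ : IsFiltrationMap c R σ) :
    ∀ z ∈ VRm R, σ⁻¹ z ∈ VRm R ∧ c * ‖z.1‖ ≤ ‖(σ⁻¹ z).1‖ := fun z hz => by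
  simpa using hσ.mem_VRm_of_apply_mem (σ⁻¹ z) (by simpa using hz)

theorem mapsTo_perm_inv {σ : Equiv.Perm (ℂ × ℂ)} (hσ : IsFiltrationMap c R σ) :
    MapsTo ⇑σ⁻¹ (VRm R) (VRm R) := fun z hz => (hσ.perm_inv_apply_mem_VRm z hz).1

theorem image_VRp_inter_VR (hf : IsFiltrationMap c R f) (hc : 0 ≤ c) {r : ℝ}
    (hr : r < c * R) : f '' VRp R ∩ VR r = ∅ := by
  refine eq_empty_of_forall_notMem ?_
  rintro _ ⟨⟨z, hz, rfl⟩, hfz⟩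
  have hR := (mem_VRp.1 hz).2
  have hfz_le := (mem_VR.1 hfz).2
  have hexp := (hf.mapsTo_VRp z hz).2
  nlinarith

theorem image_perm_inv_VRm_inter_VR {σ : Equiv.Perm (ℂ × ℂ)} (hσ : IsFiltrationMap c R σ)
    (hc : 0 ≤ c) {r : ℝ} (hr : r < c * R) : ⇑σ⁻¹ '' VRm R ∩ VR r = ∅ := by
  refine eq_empty_of_forall_notMem ?_
  rintro _ ⟨⟨z, hz, rfl⟩, hσz⟩
  have hR := (mem_VRm.1 hz).2
  have hσz_le := (mem_VR.1 hσz).1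
  have hexp := (hσ.perm_inv_apply_mem_VRm z hz).2
  nlinarith

end IsFiltrationMap

theorem IsGenHenonDeg.eventually_isFiltrationMap {h : ℂ × ℂ → ℂ × ℂ} {d : ℕ}
    (hh : IsGenHenonDeg h d) : ∀ᶠ R in atTop, IsFiltrationMap 2 R h := by
  obtain ⟨a, p, -, hp, -, hform⟩ := hh
  have hgrowth : ∀ᶠ R in atTop, ∀ y : ℂ, R ≤ ‖y‖ → (2 + 2 * ‖a‖) * ‖y‖ ≤ ‖p.eval y‖ := by
    obtain ⟨r, -, hr⟩ := hasBasis_cobounded_norm.eventually_iff.1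
      (p.eventually_mul_norm_le_norm_eval hp (2 + 2 * ‖a‖))
    exact eventually_atTop.2 ⟨r, fun R hR y hy => hr (hR.trans hy)⟩
  refine hgrowth.mono fun R hR => ⟨?_, ?_⟩
  · rintro ⟨x, y⟩ hz
    obtain ⟨hxy, hRy⟩ := mem_VRp.1 hz
    have hp_eval := hR y hRy
    have hax : ‖a * x‖ ≤ ‖a‖ * ‖y‖ := by rw [norm_mul]; gcongr
    have hsub := norm_sub_norm_le (p.eval y) (a * x)
    rw [hform]
    refine ⟨mem_VRp.2 ⟨?_, ?_⟩, ?_⟩ <;> dsimp only <;>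
      nlinarith [norm_nonneg y, norm_nonneg a]
  · rintro ⟨x, y⟩ hz
    rw [hform, mem_VRm] at hz
    obtain ⟨hsmall, hRy⟩ := hz
    rw [hform]
    have hp_eval := hR y hRy
    have hsub := norm_sub_norm_le (p.eval y) (p.eval y - a * x)
    rw [sub_sub_cancel, norm_mul] at hsub
    have hx : 2 * ‖y‖ ≤ ‖x‖ := by nlinarith [norm_nonneg y, norm_nonneg x, norm_nonneg a]
    refine ⟨mem_VRm.2 ⟨?_, ?_⟩, hx⟩ <;> dsimp only <;> nlinarith [norm_nonneg y]

theorem IsHenon.eventually_isFiltrationMap {h : ℂ × ℂ → ℂ × ℂ} (hh : IsHenon h) :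
    ∀ᶠ R in atTop, IsFiltrationMap 2 R h := by
  obtain ⟨-, l, hl, hgen, rfl, -⟩ := hh
  have hfactors : ∀ᶠ R in atTop, ∀ f ∈ l.map Prod.fst, IsFiltrationMap 2 R f := by
    simp only [List.forall_mem_map]
    exact (eventually_all_finite l.finite_toSet).2 fun gd hgd =>
      (hgen gd hgd).eventually_isFiltrationMap
  refine hfactors.mono fun R hR => (IsFiltrationMap.foldr_comp zero_le_two hR).mono ?_
  simpa using le_self_pow₀ one_le_two (List.length_pos_iff.2 hl).ne'

theorem semigroup_filtration_general (n : ℕ)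
    (H : Fin n → Equiv.Perm (ℂ × ℂ)) (hH : ∀ i, IsHenon ⇑(H i)) :
    ∃ RS > (0 : ℝ), ∀ R > RS,
      (∀ h ∈ Subsemigroup.closure (Set.range H),
        closure (⇑h '' VRp R) ⊆ VRp R ∧ closure (⇑h⁻¹ '' VRm R) ⊆ VRm R) ∧
      (∀ hseq : ℕ → Equiv.Perm (ℂ × ℂ),
        (∀ k : ℕ, ∃ w : Fin (k + 1) → Fin n, hseq k = wordProd H w) →
        ∃ Rk : ℕ → ℝ, Tendsto Rk atTop atTop ∧
          ∀ k : ℕ, (⇑(hseq k) '' VRp R) ∩ VR (Rk k) = ∅ ∧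
            (⇑(hseq k)⁻¹ '' VRm R) ∩ VR (Rk k) = ∅) := by
  obtain ⟨R₀, hR₀⟩ := eventually_atTop.1
    (eventually_all.2 fun i => (hH i).eventually_isFiltrationMap)
  refine ⟨max R₀ 1, by positivity, fun R hR => ?_⟩
  have hgen : ∀ i, IsFiltrationMap 2 R (H i) := hR₀ R (le_max_left _ _ |>.trans hR.le)
  have hR_pos : 0 < R := (lt_max_of_lt_right one_pos).trans hR
  refine ⟨fun h hmem => ?_, fun hseq hword => ?_⟩
  · have hh : IsFiltrationMap 1 R h := by
      induction hmem using Subsemigroup.closure_induction with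
      | mem _ hσ => obtain ⟨i, rfl⟩ := hσ; exact (hgen i).mono one_le_two
      | mul σ τ _ _ hσ hτ => simpa using hσ.comp hτ zero_le_one zero_le_one
    exact ⟨closure_minimal hh.mapsTo.image_subset (isClosed_VRp R),
      closure_minimal hh.mapsTo_perm_inv.image_subset (isClosed_VRm R)⟩
  · refine ⟨fun k => 2 ^ k * R,
      (tendsto_pow_atTop_atTop_of_one_lt one_lt_two).atTop_mul_const hR_pos, fun k => ?_⟩
    obtain ⟨w, hw⟩ := hword k
    have hletters : ∀ σ ∈ List.ofFn fun j => H (w j), IsFiltrationMap 2 R σ := by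
      simp only [List.mem_ofFn']
      rintro _ ⟨j, rfl⟩
      exact hgen (w j)
    have hk : IsFiltrationMap (2 ^ (k + 1)) R (hseq k) := by
      simpa [hw, wordProd] using IsFiltrationMap.list_prod zero_le_two hletters
    have hr : 2 ^ k * R < 2 ^ (k + 1) * R := by gcongr <;> norm_num
    exact ⟨hk.image_VRp_inter_VR (by positivity) hr,
      hk.image_perm_inv_VRm_inter_VR (by positivity) hr⟩

/-- filtration for a finitely generated Hénon semigroup: there is a
radius of filtration `R_S > 0` such that for every `R > R_S` and every `h` in the
semigroup, `closure (h(V_R^+)) ⊆ V_R^+` and `closure (h⁻¹(V_R^-)) ⊆ V_R^-`; and for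
every sequence `h_k` of word length `k` there are radii `R_k → ∞` with
`h_k(V_R^+) ∩ V_{R_k} = ∅` and `h_k⁻¹(V_R^-) ∩ V_{R_k} = ∅`. -/
theorem semigroup_filtration (n : ℕ) (hn : 0 < n)
    (H : Fin n → Equiv.Perm (ℂ × ℂ)) (hH : ∀ i, IsHenon ⇑(H i)) :
    ∃ RS > (0 : ℝ), ∀ R > RS,
      (∀ h ∈ Subsemigroup.closure (Set.range H),
        closure (⇑h '' VRp R) ⊆ VRp R ∧ closure (⇑h⁻¹ '' VRm R) ⊆ VRm R) ∧
      (∀ hseq : ℕ → Equiv.Perm (ℂ × ℂ),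
        (∀ k : ℕ, ∃ w : Fin (k + 1) → Fin n, hseq k = wordProd H w) →
        ∃ Rk : ℕ → ℝ, Tendsto Rk atTop atTop ∧
          ∀ k : ℕ, (⇑(hseq k) '' VRp R) ∩ VR (Rk k) = ∅ ∧
            (⇑(hseq k)⁻¹ '' VRm R) ∩ VR (Rk k) = ∅) :=
  semigroup_filtration_general n H hH
end
end

section
/- Let S be a semigroup of Hénon maps with radius of filtration R_S, R > R_S. Then the weak escaping set U_S^+(weak) equals the increasing union over k ≥ 1 of the sets ⋂_{h ∈ G_k} h^{-1}(V_R^+), and the strong escaping set U_S^+(strong) equals the union over k ≥ 1 of ⋃_{h ∈ G_k} h^{-1}(V_R^+). -/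
open Filter Metric Set Bornology

noncomputable section

/-- Strong filled positive Julia set of the semigroup `S`: points whose forward
images under every sequence in `S` stay bounded. -/
def KSstrongP (S : Set (Equiv.Perm (ℂ × ℂ))) : Set (ℂ × ℂ) :=
  {z | ∀ h : ℕ → Equiv.Perm (ℂ × ℂ), (∀ k, h k ∈ S) →
    IsBounded (Set.range fun k => h k z)}

/-- Strong filled negative Julia set of the semigroup `S`. -/
def KSstrongM (S : Set (Equiv.Perm (ℂ × ℂ))) : Set (ℂ × ℂ) :=
  {z | ∀ h : ℕ → Equiv.Perm (ℂ × ℂ), (∀ k, h k ∈ S) →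
    IsBounded (Set.range fun k => (h k)⁻¹ z)}

/-- Weak filled positive Julia set: there exist elements of word lengths
`n_k → ∞` with bounded images. -/
def KSweakP {n : ℕ} (H : Fin n → Equiv.Perm (ℂ × ℂ)) : Set (ℂ × ℂ) :=
  {z | ∃ (nk : ℕ → ℕ) (w : (k : ℕ) → Fin (nk k) → Fin n),
    Tendsto nk atTop atTop ∧ IsBounded (Set.range fun k => wordProd H (w k) z)}

/-- Weak filled negative Julia set. -/
def KSweakM {n : ℕ} (H : Fin n → Equiv.Perm (ℂ × ℂ)) : Set (ℂ × ℂ) :=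
  {z | ∃ (nk : ℕ → ℕ) (w : (k : ℕ) → Fin (nk k) → Fin n),
    Tendsto nk atTop atTop ∧ IsBounded (Set.range fun k => (wordProd H (w k))⁻¹ z)}

/-! For large `R` every map of the family sends `V_R^+` into itself at least doubling `|y|`, and
its inverse sends `V_R^-` into itself at least doubling `|x|`. The property survives composition,
so a word of length `k` expands by `2^k`. Hence an orbit that enters `V_R^+` escapes to infinity,
while a point whose image under a word avoids `V_R^+` is mapped into `V_R`, or into `V_R^-` where
the backward expansion bounds its norm by `‖z‖ / 2^k`. Both bounds are independent of the word,
and once `2^k R > ‖z‖` only the first case can occur. -/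

theorem Polynomial.exists_mul_norm_le_norm_eval {𝕜 : Type*} [NormedField 𝕜] (p : Polynomial 𝕜)
    (hp : 2 ≤ p.natDegree) (M : ℝ) : ∃ r, ∀ y : 𝕜, r ≤ ‖y‖ → M * ‖y‖ ≤ ‖p.eval y‖ := by
  have hq : 0 < p.divX.degree := Polynomial.natDegree_pos_iff_degree_pos.mp <| by
    rw [Polynomial.natDegree_divX_eq_natDegree_tsub_one]; omega
  obtain ⟨r, hr⟩ := eventually_atTop.1 <| eventually_comap.1 <|
    (p.divX.tendsto_norm_atTop hq tendsto_comap).eventually_ge_atTop (M + ‖p.coeff 0‖)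
  refine ⟨max r 1, fun y hy => ?_⟩
  have hqy : M + ‖p.coeff 0‖ ≤ ‖p.divX.eval y‖ := hr ‖y‖ (le_of_max_le_left hy) y rfl
  have hpy : p.eval y = p.divX.eval y * y + p.coeff 0 := by
    conv_lhs => rw [← p.divX_mul_X_add]
    simp
  calc M * ‖y‖ ≤ ‖p.divX.eval y‖ * ‖y‖ - ‖p.coeff 0‖ := by
        nlinarith [le_of_max_le_right hy, norm_nonneg (p.coeff 0)]
    _ = ‖p.divX.eval y * y‖ - ‖-p.coeff 0‖ := by rw [norm_mul, norm_neg]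
    _ ≤ ‖p.eval y‖ := by simpa [hpy] using norm_sub_norm_le (p.divX.eval y * y) (-p.coeff 0)

structure FiltrationExpanding (f : ℂ × ℂ → ℂ × ℂ) (c R : ℝ) : Prop where
  forward : ∀ z ∈ VRp R, f z ∈ VRp R ∧ c * ‖z.2‖ ≤ ‖(f z).2‖
  backward : ∀ z, f z ∈ VRm R → z ∈ VRm R ∧ c * ‖(f z).1‖ ≤ ‖z.1‖

theorem norm_le_of_notMem_VRp_of_notMem_VRm {R : ℝ} {z : ℂ × ℂ} (hp : z ∉ VRp R)
    (hm : z ∉ VRm R) : ‖z‖ ≤ R := by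
  simp only [VRp, VRm, mem_ofPred_eq, max_le_iff, not_and, not_le] at hp hm
  rw [Prod.norm_def]
  rcases le_total ‖z.1‖ ‖z.2‖ with h | h
  · exact max_le (h.trans (hp h).le) (hp h).le
  · exact max_le (hm h).le (h.trans (hm h).le)

namespace FiltrationExpanding

variable {f g : ℂ × ℂ → ℂ × ℂ} {a b c R : ℝ}

theorem id (R : ℝ) : FiltrationExpanding id 1 R :=
  ⟨fun z hz => ⟨hz, by simp⟩, fun z hz => ⟨hz, by simp⟩⟩

theorem mono (hf : FiltrationExpanding f c R) (hbc : b ≤ c) : FiltrationExpanding f b R where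
  forward z hz := (hf.forward z hz).imp_right
    (le_trans (mul_le_mul_of_nonneg_right hbc (norm_nonneg _)))
  backward z hz := (hf.backward z hz).imp_right
    (le_trans (mul_le_mul_of_nonneg_right hbc (norm_nonneg _)))

theorem comp (hg : FiltrationExpanding g a R) (hf : FiltrationExpanding f b R) (ha : 0 ≤ a)
    (hb : 0 ≤ b) : FiltrationExpanding (g ∘ f) (a * b) R where
  forward z hz := by
    obtain ⟨hfz, hfb⟩ := hf.forward z hz
    obtain ⟨hgfz, hga⟩ := hg.forward (f z) hfz
    refine ⟨hgfz, ?_⟩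
    calc a * b * ‖z.2‖ = a * (b * ‖z.2‖) := mul_assoc ..
      _ ≤ a * ‖(f z).2‖ := by gcongr
      _ ≤ ‖(g (f z)).2‖ := hga
  backward z hz := by
    obtain ⟨hfz, hga⟩ := hg.backward (f z) hz
    obtain ⟨hz', hfb⟩ := hf.backward z hfz
    refine ⟨hz', ?_⟩
    calc a * b * ‖(g (f z)).1‖ = b * (a * ‖(g (f z)).1‖) := by ring
      _ ≤ b * ‖(f z).1‖ := by gcongr
      _ ≤ ‖z.1‖ := hfb

theorem mul_norm_le (hf : FiltrationExpanding f c R) (hc : 0 ≤ c) {z : ℂ × ℂ}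
    (hz : f z ∉ VRp R) : c * ‖f z‖ ≤ max (c * R) ‖z‖ := by
  by_cases hm : f z ∈ VRm R
  · have hnorm : ‖f z‖ = ‖(f z).1‖ :=
      Prod.norm_def (f z) ▸ max_eq_left (le_of_max_le_left hm)
    rw [hnorm]
    exact ((hf.backward z hm).2.trans (norm_fst_le z)).trans (le_max_right _ _)
  · exact (mul_le_mul_of_nonneg_left (norm_le_of_notMem_VRp_of_notMem_VRm hz hm) hc).trans
      (le_max_left _ _)

end FiltrationExpanding

theorem IsGenHenonDeg.eventually_filtrationExpanding {h : ℂ × ℂ → ℂ × ℂ} {d : ℕ}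
    (hh : IsGenHenonDeg h d) : ∀ᶠ R in atTop, FiltrationExpanding h 2 R := by
  obtain ⟨a, p, ha, hdeg, -, hfun⟩ := hh
  obtain ⟨r, hr⟩ := p.exists_mul_norm_le_norm_eval hdeg (2 * ‖a‖ + 2)
  have hapos : 0 < ‖a‖ := norm_pos_iff.mpr ha
  have hz : ∀ z : ℂ × ℂ, h z = (z.2, p.eval z.2 - a * z.1) := fun z => hfun z.1 z.2
  filter_upwards [eventually_ge_atTop r] with R hrR
  constructor
  · intro z hzp
    simp only [VRp, mem_ofPred_eq, max_le_iff, hz] at hzp ⊢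
    have hp := hr z.2 (hrR.trans hzp.2)
    have hsub := norm_sub_norm_le (p.eval z.2) (a * z.1)
    rw [norm_mul] at hsub
    have : ‖a‖ * ‖z.1‖ ≤ ‖a‖ * ‖z.2‖ := by gcongr; exact hzp.1
    refine ⟨⟨?_, ?_⟩, ?_⟩ <;> nlinarith [norm_nonneg z.2]
  · intro z hzm
    simp only [VRm, mem_ofPred_eq, max_le_iff, hz] at hzm ⊢
    have hp := hr z.2 (hrR.trans hzm.2)
    have hsub := norm_sub_norm_le (p.eval z.2) (p.eval z.2 - a * z.1)
    rw [sub_sub_cancel, norm_mul] at hsub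
    have hx : 2 * ‖z.2‖ ≤ ‖z.1‖ := by nlinarith [norm_nonneg z.2]
    exact ⟨⟨by linarith [norm_nonneg z.2], by linarith [norm_nonneg z.2]⟩, hx⟩

theorem eventually_filtrationExpanding_foldr_comp :
    ∀ l : List (ℂ × ℂ → ℂ × ℂ), (∀ f ∈ l, ∀ᶠ R in atTop, FiltrationExpanding f 2 R) →
      ∀ᶠ R in atTop, FiltrationExpanding (l.foldr (· ∘ ·) id) (2 ^ l.length) R
  | [], _ => .of_forall fun R => by simpa using FiltrationExpanding.id R
  | f :: l, hl => by
    filter_upwards [hl f List.mem_cons_self,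
      eventually_filtrationExpanding_foldr_comp l fun g hg => hl g (List.mem_cons_of_mem f hg)]
      with R hf hfold
    simpa [pow_succ'] using hf.comp hfold zero_le_two (by positivity)

theorem IsHenon.eventually_filtrationExpanding {h : ℂ × ℂ → ℂ × ℂ} (hh : IsHenon h) :
    ∀ᶠ R in atTop, FiltrationExpanding h 2 R := by
  obtain ⟨-, l, hne, hgen, rfl, -⟩ := hh
  have hlen : 2 ≤ 2 ^ (l.map Prod.fst).length := by
    rw [List.length_map]
    exact le_self_pow₀ one_le_two (List.length_pos_iff.mpr hne).ne'
  filter_upwards [eventually_filtrationExpanding_foldr_comp (l.map Prod.fst) <| by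
      simpa using fun f d hfd => (hgen (f, d) hfd).eventually_filtrationExpanding]
    with R hR
  exact hR.mono (mod_cast hlen)

theorem not_isBounded_range_of_tendsto_norm {ι E : Type*} [SeminormedAddGroup E] {l : Filter ι}
    [l.NeBot] {f : ι → E} (hf : Tendsto (fun i => ‖f i‖) l atTop) : ¬IsBounded (range f) := by
  intro hbdd
  obtain ⟨C, hC⟩ := isBounded_iff_forall_norm_le.1 hbdd
  obtain ⟨i, hi⟩ := (hf.eventually_gt_atTop C).exists
  exact (hC _ (mem_range_self i)).not_gt hi

section Words

variable {n : ℕ} (H : Fin n → Equiv.Perm (ℂ × ℂ))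

theorem wordProd_zero (w : Fin 0 → Fin n) : wordProd H w = 1 := rfl

theorem wordProd_succ {k : ℕ} (w : Fin (k + 1) → Fin n) :
    wordProd H w = H (w 0) * wordProd H (fun i => w i.succ) := by
  rw [wordProd, List.ofFn_succ, List.prod_cons, wordProd]

theorem wordProd_append {a b : ℕ} (u : Fin a → Fin n) (v : Fin b → Fin n) :
    wordProd H (Fin.append u v) = wordProd H u * wordProd H v := by
  simp only [wordProd]
  rw [← List.prod_append, ← List.ofFn_fin_append]
  congr 2
  funext i
  refine Fin.addCases (fun j => ?_) (fun j => ?_) i <;> simp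

theorem mem_closure_range_iff_exists_wordProd {g : Equiv.Perm (ℂ × ℂ)} :
    g ∈ Subsemigroup.closure (range H) ↔ ∃ (k : ℕ) (w : Fin (k + 1) → Fin n), wordProd H w = g := by
  constructor
  · intro hg
    induction hg using Subsemigroup.closure_induction with
    | mem _ hx =>
      obtain ⟨i, rfl⟩ := hx
      exact ⟨0, fun _ => i, by simp [wordProd_succ, wordProd_zero]⟩
    | mul _ _ _ _ hx hy =>
      obtain ⟨k, u, rfl⟩ := hx
      obtain ⟨l, v, rfl⟩ := hy
      exact ⟨k + 1 + l, (Fin.append u v : Fin (k + 1 + (l + 1)) → Fin n), wordProd_append H u v⟩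
  · rintro ⟨k, w, rfl⟩
    induction k with
    | zero =>
      rw [wordProd_succ, wordProd_zero, mul_one]
      exact Subsemigroup.subset_closure (mem_range_self _)
    | succ k ih =>
      rw [wordProd_succ]
      exact mul_mem (Subsemigroup.subset_closure (mem_range_self _)) (ih _)

variable {H} {R : ℝ} (hH : ∀ i, FiltrationExpanding (H i) 2 R)
include hH

theorem FiltrationExpanding.wordProd {k : ℕ} (w : Fin k → Fin n) :
    FiltrationExpanding (wordProd H w) (2 ^ k) R := by
  induction k with
  | zero => simpa [wordProd_zero] using FiltrationExpanding.id R
  | succ k ih =>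
    rw [wordProd_succ, Equiv.Perm.coe_mul, pow_succ']
    exact (hH (w 0)).comp (ih _) zero_le_two (by positivity)

theorem pow_mul_le_norm_wordProd_of_forall_mem_VRp {k : ℕ} {z : ℂ × ℂ}
    (hz : ∀ w : Fin (k + 1) → Fin n, wordProd H w z ∈ VRp R) :
    ∀ N ≥ k + 1, ∀ w : Fin N → Fin n,
      wordProd H w z ∈ VRp R ∧ 2 ^ (N - (k + 1)) * R ≤ ‖(wordProd H w z).2‖ := by
  refine Nat.le_induction (fun w => ⟨hz w, ?_⟩) (fun N hN ih w => ?_)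
  · simpa using le_of_max_le_right (hz w)
  · obtain ⟨hmem, hle⟩ := ih fun i => w i.succ
    rw [wordProd_succ, Equiv.Perm.mul_apply]
    refine ((hH (w 0)).forward _ hmem).imp_right fun h2 => ?_
    rw [Nat.sub_add_comm hN, pow_succ', mul_assoc]
    linarith

theorem compl_KSweakP_subset (hR : 0 < R) :
    (KSweakP H)ᶜ ⊆ ⋃ k : ℕ, ⋂ w : Fin (k + 1) → Fin n, ⇑(wordProd H w) ⁻¹' VRp R := by
  intro z hz
  by_contra hcontra
  simp only [mem_iUnion, mem_iInter, mem_preimage, not_exists, not_forall] at hcontra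
  choose w hw using hcontra
  obtain ⟨K, hK⟩ := eventually_atTop.1 <|
    ((tendsto_pow_atTop_atTop_of_one_lt one_lt_two).atTop_mul_const hR).eventually_gt_atTop ‖z‖
  refine hz ⟨fun k => k + K + 1, fun k => w (k + K), tendsto_add_atTop_nat (K + 1), ?_⟩
  refine isBounded_iff_forall_norm_le.2 ⟨R, ?_⟩
  rintro _ ⟨k, rfl⟩
  have hc : (0 : ℝ) < 2 ^ (k + K + 1) := by positivity
  have hmax := (FiltrationExpanding.wordProd hH (w (k + K))).mul_norm_le hc.le (hw (k + K))
  rw [max_eq_left (hK _ (by omega)).le] at hmax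
  exact le_of_mul_le_mul_left hmax hc

theorem subset_compl_KSweakP (hR : 0 < R) :
    ⋃ k : ℕ, ⋂ w : Fin (k + 1) → Fin n, ⇑(wordProd H w) ⁻¹' VRp R ⊆ (KSweakP H)ᶜ := by
  rintro z hz ⟨N, w, hN, hbdd⟩
  obtain ⟨k, hk⟩ := mem_iUnion.1 hz
  refine not_isBounded_range_of_tendsto_norm (tendsto_atTop_mono' _ ?_ <|
    ((tendsto_pow_atTop_atTop_of_one_lt one_lt_two).comp
      ((tendsto_sub_atTop_nat (k + 1)).comp hN)).atTop_mul_const hR) hbdd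
  filter_upwards [hN.eventually_ge_atTop (k + 1)] with j hj
  exact (pow_mul_le_norm_wordProd_of_forall_mem_VRp hH (mem_iInter.1 hk) _ hj _).2.trans (norm_snd_le _)

theorem compl_KSstrongP_subset :
    (KSstrongP (Subsemigroup.closure (range H) : Set (Equiv.Perm (ℂ × ℂ))))ᶜ ⊆
      ⋃ k : ℕ, ⋃ w : Fin (k + 1) → Fin n, ⇑(wordProd H w) ⁻¹' VRp R := by
  intro z hz
  by_contra hcontra
  simp only [mem_iUnion, mem_preimage, not_exists] at hcontra
  refine hz fun g hg => isBounded_iff_forall_norm_le.2 ⟨max R ‖z‖, ?_⟩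
  rintro _ ⟨j, rfl⟩
  obtain ⟨k, w, hw⟩ := (mem_closure_range_iff_exists_wordProd H).1 (hg j)
  change ‖g j z‖ ≤ _
  rw [← hw]
  have hone : FiltrationExpanding (wordProd H w) 1 R :=
    (FiltrationExpanding.wordProd hH w).mono (one_le_pow₀ one_le_two)
  simpa using hone.mul_norm_le zero_le_one (hcontra k w)

theorem subset_compl_KSstrongP (hR : 0 < R) :
    ⋃ k : ℕ, ⋃ w : Fin (k + 1) → Fin n, ⇑(wordProd H w) ⁻¹' VRp R ⊆
      (KSstrongP (Subsemigroup.closure (range H) : Set (Equiv.Perm (ℂ × ℂ))))ᶜ := by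
  intro z hz hbdd
  obtain ⟨k, w, hw⟩ : ∃ (k : ℕ) (w : Fin (k + 1) → Fin n), wordProd H w z ∈ VRp R := by
    simpa using hz
  let prefixed (m : ℕ) : Fin (m + (k + 1)) → Fin n := Fin.append (fun _ : Fin m => w 0) w
  refine not_isBounded_range_of_tendsto_norm (tendsto_atTop_mono (fun m => ?_) <|
    (tendsto_pow_atTop_atTop_of_one_lt one_lt_two).atTop_mul_const hR)
    (hbdd (fun m => wordProd H (prefixed m)) fun m =>
      (mem_closure_range_iff_exists_wordProd H).2 ⟨m + k, prefixed m, rfl⟩)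
  have hgrow := ((FiltrationExpanding.wordProd hH (fun _ : Fin m => w 0)).forward _ hw).2
  rw [← Equiv.Perm.mul_apply, ← wordProd_append] at hgrow
  calc 2 ^ m * R ≤ 2 ^ m * ‖(wordProd H w z).2‖ := by gcongr; exact le_of_max_le_right hw
    _ ≤ ‖(wordProd H (prefixed m) z).2‖ := hgrow
    _ ≤ ‖wordProd H (prefixed m) z‖ := norm_snd_le _

end Words

theorem escaping_sets_description_general (n : ℕ)
    (H : Fin n → Equiv.Perm (ℂ × ℂ)) (hH : ∀ i, IsHenon ⇑(H i)) :
    ∃ RS > (0 : ℝ), ∀ R > RS,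
      ((KSweakP H)ᶜ =
        ⋃ k : ℕ, ⋂ w : Fin (k + 1) → Fin n, ⇑(wordProd H w) ⁻¹' VRp R) ∧
      ((KSstrongP (Subsemigroup.closure (Set.range H) : Set (Equiv.Perm (ℂ × ℂ))))ᶜ =
        ⋃ k : ℕ, ⋃ w : Fin (k + 1) → Fin n, ⇑(wordProd H w) ⁻¹' VRp R) := by
  obtain ⟨RS, hRS⟩ := eventually_atTop.1 <|
    (eventually_all.2 fun i => (hH i).eventually_filtrationExpanding).and (eventually_gt_atTop 0)
  refine ⟨max RS 1, by positivity, fun R hR => ?_⟩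
  obtain ⟨hHR, hR0⟩ := hRS R ((le_max_left _ _).trans hR.le)
  exact ⟨(compl_KSweakP_subset hHR hR0).antisymm (subset_compl_KSweakP hHR hR0),
    (compl_KSstrongP_subset hHR).antisymm (subset_compl_KSstrongP hHR hR0)⟩

/-- for `R` beyond the radius of filtration, the weak escaping set
(complement of the weak filled Julia set) equals `⋃_{k≥1} ⋂_{h ∈ G_k} h⁻¹(V_R^+)`,
and the strong escaping set (complement of the strong filled Julia set) equals
`⋃_{k≥1} ⋃_{h ∈ G_k} h⁻¹(V_R^+)`. -/
theorem escaping_sets_description (n : ℕ) (hn : 0 < n)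
    (H : Fin n → Equiv.Perm (ℂ × ℂ)) (hH : ∀ i, IsHenon ⇑(H i)) :
    ∃ RS > (0 : ℝ), ∀ R > RS,
      ((KSweakP H)ᶜ =
        ⋃ k : ℕ, ⋂ w : Fin (k + 1) → Fin n, ⇑(wordProd H w) ⁻¹' VRp R) ∧
      ((KSstrongP (Subsemigroup.closure (Set.range H) : Set (Equiv.Perm (ℂ × ℂ))))ᶜ =
        ⋃ k : ℕ, ⋃ w : Fin (k + 1) → Fin n, ⇑(wordProd H w) ⁻¹' VRp R) :=
  escaping_sets_description_general n H hH
end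
end

section
/- There exist constants such that G_G^+(x,y) = log|y| + O(1) on V_R^+ and G_G^-(x,y) = log|x| + O(1) on V_R^-; precisely, |G_G^+(x,y) − log|y|| ≤ M₀ Σ_{i≥1} (n₀/D)^i on V_R^+. -/
open Filter Metric Set Bornology

noncomputable section

/-- `log⁺ t = max (log t) 0`. -/
def logPlus (t : ℝ) : ℝ := max (Real.log t) 0

/-- The `k`-th positive Green function of the semigroup with respect to the
generating family `H` and total degree `D`:
`G_k^+(z) = D^{-k} ∑_{h ∈ 𝒢_k} log⁺ ‖h z‖` (sum over all words of length `k`). -/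
def greenSeqP {n : ℕ} (H : Fin n → Equiv.Perm (ℂ × ℂ)) (D : ℝ) (k : ℕ)
    (z : ℂ × ℂ) : ℝ :=
  (D ^ k)⁻¹ * ∑ w : Fin k → Fin n, logPlus ‖wordProd H w z‖

/-- The `k`-th negative Green function:
`G_k^-(z) = D^{-k} ∑_{h ∈ 𝒢_k} log⁺ ‖h⁻¹ z‖`. -/
def greenSeqM {n : ℕ} (H : Fin n → Equiv.Perm (ℂ × ℂ)) (D : ℝ) (k : ℕ)
    (z : ℂ × ℂ) : ℝ :=
  (D ^ k)⁻¹ * ∑ w : Fin k → Fin n, logPlus ‖(wordProd H w)⁻¹ z‖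

section GreenAux

variable {n : ℕ}

lemma wordProd_snoc (H : Fin n → Equiv.Perm (ℂ × ℂ)) {k : ℕ} (w : Fin k → Fin n) (i : Fin n) :
    wordProd H (Fin.snoc w i) = wordProd H w * H i := by
  unfold wordProd
  rw [List.ofFn_succ']
  simp [Fin.snoc_castSucc]

lemma wordProd_cons (H : Fin n → Equiv.Perm (ℂ × ℂ)) {k : ℕ} (w : Fin k → Fin n) (i : Fin n) :
    wordProd H (Fin.cons i w) = H i * wordProd H w := by
  unfold wordProd
  rw [List.ofFn_succ]
  simp

lemma sum_snoc_aux {k : ℕ} (f : (Fin (k+1) → Fin n) → ℝ) :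
    ∑ w : Fin (k+1) → Fin n, f w = ∑ i : Fin n, ∑ w : Fin k → Fin n, f (Fin.snoc w i) := by
  rw [← (Fin.snocEquiv (fun _ => Fin n)).sum_comp f, Fintype.sum_prod_type]
  rfl

lemma sum_cons_aux {k : ℕ} (f : (Fin (k+1) → Fin n) → ℝ) :
    ∑ w : Fin (k+1) → Fin n, f w = ∑ i : Fin n, ∑ w : Fin k → Fin n, f (Fin.cons i w) := by
  rw [← (Fin.consEquiv (fun _ => Fin n)).sum_comp f, Fintype.sum_prod_type]
  rfl

lemma greenSeqP_succ (H : Fin n → Equiv.Perm (ℂ × ℂ)) (D : ℝ) (k : ℕ) (z : ℂ × ℂ) :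
    greenSeqP H D (k+1) z = D⁻¹ * ∑ i : Fin n, greenSeqP H D k (H i z) := by
  unfold greenSeqP
  rw [sum_snoc_aux (fun w => logPlus ‖wordProd H w z‖), Finset.mul_sum, Finset.mul_sum]
  refine Finset.sum_congr rfl fun i _ => ?_
  simp only [wordProd_snoc, Equiv.Perm.mul_apply]
  rw [pow_succ, mul_inv]
  ring

lemma greenSeqM_succ (H : Fin n → Equiv.Perm (ℂ × ℂ)) (D : ℝ) (k : ℕ) (z : ℂ × ℂ) :
    greenSeqM H D (k+1) z = D⁻¹ * ∑ i : Fin n, greenSeqM H D k ((H i)⁻¹ z) := by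
  unfold greenSeqM
  rw [sum_cons_aux (fun w => logPlus ‖(wordProd H w)⁻¹ z‖), Finset.mul_sum, Finset.mul_sum]
  refine Finset.sum_congr rfl fun i _ => ?_
  simp only [wordProd_cons, mul_inv_rev, Equiv.Perm.mul_apply]
  rw [pow_succ, mul_inv]
  ring

lemma greenSeqP_zero (H : Fin n → Equiv.Perm (ℂ × ℂ)) (D : ℝ) (z : ℂ × ℂ) :
    greenSeqP H D 0 z = logPlus ‖z‖ := by
  simp [greenSeqP, wordProd]

lemma greenSeqM_zero (H : Fin n → Equiv.Perm (ℂ × ℂ)) (D : ℝ) (z : ℂ × ℂ) :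
    greenSeqM H D 0 z = logPlus ‖z‖ := by
  simp [greenSeqM, wordProd]

lemma green_abs_le {n : ℕ} (T : Fin n → ℂ × ℂ → ℂ × ℂ) (V : Set (ℂ × ℂ))
    (d : Fin n → ℕ) (φ : ℂ × ℂ → ℝ) (M₀ : ℝ) (hM₀ : 0 ≤ M₀)
    (a : ℕ → (ℂ × ℂ) → ℝ) (G : ℂ × ℂ → ℝ)
    (hn : 0 < n) (hd : ∀ i, 2 ≤ d i)
    (hrec : ∀ k z, a (k+1) z = (∑ i, (d i : ℝ))⁻¹ * ∑ i, a k (T i z))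
    (hV : ∀ i, ∀ z ∈ V, T i z ∈ V)
    (ha0 : ∀ z ∈ V, a 0 z = φ z)
    (hφ : ∀ i, ∀ z ∈ V, |φ (T i z) - (d i : ℝ) * φ z| ≤ M₀)
    (hG : ∀ z, Tendsto (fun k => a k z) atTop (nhds (G z))) :
    ∀ z ∈ V, |G z - φ z| ≤ M₀ * ∑' i : ℕ, ((n : ℝ) / ∑ i, (d i : ℝ)) ^ (i + 1) := by
  set D : ℝ := ∑ i, (d i : ℝ) with hDdef
  have hn' : (0 : ℝ) < n := by exact_mod_cast hn
  have hD2 : 2 * (n : ℝ) ≤ D := by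
    calc 2 * (n : ℝ) = ∑ _i : Fin n, (2 : ℝ) := by
          rw [Finset.sum_const, Finset.card_univ, Fintype.card_fin, nsmul_eq_mul]; ring
      _ ≤ D := Finset.sum_le_sum fun i _ => by exact_mod_cast hd i
  have hD0 : (0 : ℝ) < D := lt_of_lt_of_le (by linarith) hD2
  have hr0 : (0 : ℝ) ≤ (n : ℝ) / D := div_nonneg hn'.le hD0.le
  have hr1 : (n : ℝ) / D < 1 := (div_lt_one hD0).mpr (by linarith)
  have key : ∀ k, ∀ z ∈ V, |a (k+1) z - a k z| ≤ M₀ * ((n : ℝ) / D) ^ (k+1) := by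
    intro k
    induction k with
    | zero =>
      intro z hz
      have s1 : ∑ i, a 0 (T i z) = ∑ i, φ (T i z) :=
        Finset.sum_congr rfl fun i _ => ha0 _ (hV i z hz)
      have e1 : a 1 z - a 0 z = D⁻¹ * ∑ i, (φ (T i z) - (d i : ℝ) * φ z) := by
        rw [hrec 0 z, ha0 z hz, s1, Finset.sum_sub_distrib, mul_sub, ← Finset.sum_mul,
          ← hDdef, ← mul_assoc, inv_mul_cancel₀ hD0.ne', one_mul]
      rw [e1]
      calc |D⁻¹ * ∑ i, (φ (T i z) - (d i : ℝ) * φ z)|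
          = D⁻¹ * |∑ i, (φ (T i z) - (d i : ℝ) * φ z)| := by
            rw [abs_mul, abs_of_nonneg (inv_nonneg.mpr hD0.le)]
        _ ≤ D⁻¹ * ∑ i : Fin n, M₀ :=
            mul_le_mul_of_nonneg_left
              ((Finset.abs_sum_le_sum_abs _ _).trans
                (Finset.sum_le_sum fun i _ => hφ i z hz)) (inv_nonneg.mpr hD0.le)
        _ = M₀ * ((n : ℝ) / D) ^ (0+1) := by
            rw [Finset.sum_const, Finset.card_univ, Fintype.card_fin, nsmul_eq_mul, pow_one]
            ring
    | succ k ih =>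
      intro z hz
      have e : a (k+2) z - a (k+1) z = D⁻¹ * ∑ i, (a (k+1) (T i z) - a k (T i z)) := by
        rw [hrec (k+1) z, hrec k z, Finset.sum_sub_distrib, mul_sub]
      rw [e]
      calc |D⁻¹ * ∑ i, (a (k+1) (T i z) - a k (T i z))|
          = D⁻¹ * |∑ i, (a (k+1) (T i z) - a k (T i z))| := by
            rw [abs_mul, abs_of_nonneg (inv_nonneg.mpr hD0.le)]
        _ ≤ D⁻¹ * ∑ i : Fin n, (M₀ * ((n : ℝ) / D) ^ (k+1)) :=
            mul_le_mul_of_nonneg_left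
              ((Finset.abs_sum_le_sum_abs _ _).trans
                (Finset.sum_le_sum fun i _ => ih (T i z) (hV i z hz)))
              (inv_nonneg.mpr hD0.le)
        _ = M₀ * ((n : ℝ) / D) ^ (k+1+1) := by
            rw [Finset.sum_const, Finset.card_univ, Fintype.card_fin, nsmul_eq_mul, pow_succ]
            ring
  intro z hz
  have hsum : Summable (fun i : ℕ => ((n : ℝ) / D) ^ (i + 1)) := by
    simpa [pow_succ] using (summable_geometric_of_lt_one hr0 hr1).mul_right ((n : ℝ) / D)
  have hbound : ∀ K, |a K z - φ z| ≤ M₀ * ∑' i : ℕ, ((n : ℝ) / D) ^ (i + 1) := by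
    intro K
    rw [← ha0 z hz]
    calc |a K z - a 0 z|
        = |∑ k ∈ Finset.range K, (a (k+1) z - a k z)| := by
          rw [Finset.sum_range_sub (fun k => a k z) K]
      _ ≤ ∑ k ∈ Finset.range K, |a (k+1) z - a k z| := Finset.abs_sum_le_sum_abs _ _
      _ ≤ ∑ k ∈ Finset.range K, M₀ * ((n : ℝ) / D) ^ (k+1) :=
          Finset.sum_le_sum fun k _ => key k z hz
      _ = M₀ * ∑ k ∈ Finset.range K, ((n : ℝ) / D) ^ (k+1) := by rw [Finset.mul_sum]
      _ ≤ M₀ * ∑' i : ℕ, ((n : ℝ) / D) ^ (i + 1) :=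
          mul_le_mul_of_nonneg_left
            (Summable.sum_le_tsum _ (fun i _ => pow_nonneg hr0 _) hsum) hM₀
  have hlim : Tendsto (fun K => |a K z - φ z|) atTop (nhds |G z - φ z|) :=
    ((hG z).sub_const (φ z)).abs
  exact le_of_tendsto hlim (Eventually.of_forall hbound)

end GreenAux
/-- logarithmic growth of the Green's functions:
`|G_𝒢^+(x,y) - log|y|| ≤ M₀ ∑_{i≥1} (n₀/D)^i` on `V_R^+`, and
`G_𝒢^-(x,y) = log|x| + O(1)` on `V_R^-`. -/
theorem green_log_growth (n : ℕ) (hn : 0 < n)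
    (H : Fin n → Equiv.Perm (ℂ × ℂ)) (d : Fin n → ℕ)
    (hH : ∀ i, IsHenonDeg ⇑(H i) (d i)) (hd : ∀ i, 2 ≤ d i)
    (R m M : ℝ) (hR : 1 ≤ R) (hm0 : 0 < m) (hm1 : m < 1) (hM : 1 < M)
    (hinv : ∀ i, ∀ z ∈ VRp R, H i z ∈ VRp R)
    (hinvm : ∀ i, ∀ z ∈ VRm R, (H i)⁻¹ z ∈ VRm R)
    (hest : ∀ i, ∀ z ∈ VRp R,
      Real.log m + (d i : ℝ) * Real.log ‖z.2‖ < Real.log ‖(H i z).2‖ ∧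
      Real.log ‖(H i z).2‖ < Real.log M + (d i : ℝ) * Real.log ‖z.2‖)
    (hestm : ∀ i, ∀ z ∈ VRm R,
      Real.log m + (d i : ℝ) * Real.log ‖z.1‖ < Real.log ‖((H i)⁻¹ z).1‖ ∧
      Real.log ‖((H i)⁻¹ z).1‖ < Real.log M + (d i : ℝ) * Real.log ‖z.1‖)
    (Gp Gm : ℂ × ℂ → ℝ)
    (hGp : ∀ z, Tendsto (fun k => greenSeqP H (∑ i, (d i : ℝ)) k z) atTop (nhds (Gp z)))
    (hGm : ∀ z, Tendsto (fun k => greenSeqM H (∑ i, (d i : ℝ)) k z) atTop (nhds (Gm z))) :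
    (∀ z ∈ VRp R,
      |Gp z - Real.log ‖z.2‖| ≤
        max |Real.log m| |Real.log M| * ∑' i : ℕ, ((n : ℝ) / ∑ i, (d i : ℝ)) ^ (i + 1)) ∧
    ∃ C : ℝ, ∀ z ∈ VRm R, |Gm z - Real.log ‖z.1‖| ≤ C := by
  have hM₀ : (0:ℝ) ≤ max |Real.log m| |Real.log M| :=
    le_trans (abs_nonneg _) (le_max_left _ _)
  have hφP : ∀ i, ∀ z ∈ VRp R,
      |Real.log ‖(H i z).2‖ - (d i : ℝ) * Real.log ‖z.2‖| ≤ max |Real.log m| |Real.log M| := by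
    intro i z hz
    obtain ⟨h1, h2⟩ := hest i z hz
    rw [abs_le]
    refine ⟨?_, ?_⟩
    · have a1 := neg_abs_le (Real.log m)
      have a2 := le_max_left |Real.log m| |Real.log M|
      linarith
    · have a1 := le_abs_self (Real.log M)
      have a2 := le_max_right |Real.log m| |Real.log M|
      linarith
  have hφM : ∀ i, ∀ z ∈ VRm R,
      |Real.log ‖((H i)⁻¹ z).1‖ - (d i : ℝ) * Real.log ‖z.1‖| ≤ max |Real.log m| |Real.log M| := by
    intro i z hz
    obtain ⟨h1, h2⟩ := hestm i z hz
    rw [abs_le]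
    refine ⟨?_, ?_⟩
    · have a1 := neg_abs_le (Real.log m)
      have a2 := le_max_left |Real.log m| |Real.log M|
      linarith
    · have a1 := le_abs_self (Real.log M)
      have a2 := le_max_right |Real.log m| |Real.log M|
      linarith
  have ha0P : ∀ z ∈ VRp R, greenSeqP H (∑ i, (d i : ℝ)) 0 z = Real.log ‖z.2‖ := by
    intro z hz
    have hz' : max ‖z.1‖ R ≤ ‖z.2‖ := hz
    rw [greenSeqP_zero]
    have h1 : ‖z‖ = ‖z.2‖ := by
      rw [Prod.norm_def]
      exact max_eq_right ((le_max_left _ _).trans hz')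
    unfold logPlus
    rw [h1]
    exact max_eq_left (Real.log_nonneg (hR.trans ((le_max_right _ _).trans hz')))
  have ha0M : ∀ z ∈ VRm R, greenSeqM H (∑ i, (d i : ℝ)) 0 z = Real.log ‖z.1‖ := by
    intro z hz
    have hz' : max ‖z.2‖ R ≤ ‖z.1‖ := hz
    rw [greenSeqM_zero]
    have h1 : ‖z‖ = ‖z.1‖ := by
      rw [Prod.norm_def]
      exact max_eq_left ((le_max_left _ _).trans hz')
    unfold logPlus
    rw [h1]
    exact max_eq_left (Real.log_nonneg (hR.trans ((le_max_right _ _).trans hz')))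
  constructor
  · exact green_abs_le (fun i => ⇑(H i)) (VRp R) d (fun z => Real.log ‖z.2‖) _ hM₀
      (greenSeqP H (∑ i, (d i : ℝ))) Gp hn hd
      (fun k z => greenSeqP_succ H _ k z) hinv ha0P hφP hGp
  · exact ⟨_, green_abs_le (fun i => ⇑((H i)⁻¹)) (VRm R) d (fun z => Real.log ‖z.1‖) _ hM₀
      (greenSeqM H (∑ i, (d i : ℝ))) Gm hn hd
      (fun k z => greenSeqM_succ H _ k z) hinvm ha0M hφM hGm⟩
end
end

section
/- Suppose both dynamical Green's functions G_G^± of a finitely generated Hénon semigroup S are independent of the choice of generating set ("unique"). If for some h ∈ S the positive Green's function satisfies G^+(z) = d_h · G^+(h(z)) for all z, then G^+ vanishes on the filled Julia set K_h^+ of h; consequently K_h^+ ⊆ K_S^+ (the strong filled Julia set) for every h ∈ S. -/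
open Filter Metric Set Bornology

noncomputable section

/-- The filled positive Julia set of a single automorphism `h`. -/
def Khp (h : Equiv.Perm (ℂ × ℂ)) : Set (ℂ × ℂ) :=
  {z | IsBounded (Set.range fun m : ℕ => (h ^ m) z)}

/-- if the (unique) positive Green's function `G⁺` of the semigroup
satisfies the functional equation `G⁺(h z) = d_h · G⁺(z)` for every `h ∈ S`, then
`G⁺` vanishes on the filled Julia set `K_h^+` of each `h ∈ S`; consequently
`K_h^+ ⊆ K_S^+` (the strong filled Julia set) for every `h ∈ S`. -/
theorem green_vanishes_on_filled_julia (n : ℕ) (hn : 0 < n)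
    (H : Fin n → Equiv.Perm (ℂ × ℂ)) (hH : ∀ i, IsHenon ⇑(H i))
    (Gp : ℂ × ℂ → ℝ) (hcont : Continuous Gp) (hnn : ∀ z, 0 ≤ Gp z)
    (hpos : ∀ z ∉ KSstrongP (Subsemigroup.closure (Set.range H) :
      Set (Equiv.Perm (ℂ × ℂ))), 0 < Gp z)
    (hfun : ∀ h ∈ Subsemigroup.closure (Set.range H),
      ∃ dh : ℝ, 1 < dh ∧ ∀ z, Gp (h z) = dh * Gp z) :
    ∀ h ∈ Subsemigroup.closure (Set.range H),
      (∀ z ∈ Khp h, Gp z = 0) ∧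
      Khp h ⊆ KSstrongP (Subsemigroup.closure (Set.range H) :
        Set (Equiv.Perm (ℂ × ℂ))) := by
  intro h hh
  obtain ⟨dh, hdh, heq⟩ := hfun h hh
  have key : ∀ z ∈ Khp h, Gp z = 0 := by
    intro z hz
    have hiter : ∀ m : ℕ, Gp ((h ^ m) z) = dh ^ m * Gp z := by
      intro m
      induction m with
      | zero => simp
      | succ m ih =>
        have : (h ^ (m + 1)) z = h ((h ^ m) z) := by
          rw [pow_succ']; rfl
        rw [this, heq, ih, pow_succ]; ring
    -- boundedness of Gp on the orbit
    have hK : IsCompact (closure (Set.range fun m : ℕ => (h ^ m) z)) :=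
      IsBounded.isCompact_closure (by exact hz)
    obtain ⟨C, hC⟩ := (hK.image hcont).bddAbove
    have hCb : ∀ m : ℕ, Gp ((h ^ m) z) ≤ C := by
      intro m
      exact hC ⟨(h ^ m) z, subset_closure ⟨m, rfl⟩, rfl⟩
    by_contra hne
    have hgz : 0 < Gp z := lt_of_le_of_ne (hnn z) (Ne.symm hne)
    obtain ⟨m, hm⟩ := pow_unbounded_of_one_lt (C / Gp z) hdh
    have : dh ^ m * Gp z ≤ C := by rw [← hiter m]; exact hCb m
    have : dh ^ m ≤ C / Gp z := (le_div_iff₀ hgz).2 this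
    linarith
  refine ⟨key, fun z hz => ?_⟩
  by_contra hns
  exact absurd (key z hz) (ne_of_gt (hpos z hns))
end
end

section
/- Let {h_k} be a sequence of Hénon maps drawn from a finite set, each attracting on B(0;r) with uniform contraction factor α ∈ (0,1) (||H_i(z)|| ≤ α||z|| on B(0;r)). Let K ⊂ Ω_{h} = {z: h_k∘...∘h_1(z) → 0} be compact. Then there is N₀(K) ≥ 1 such that for all k ≥ N₀(K), K is contained in the basin of attraction Ω_{h(k)} of the origin for the single map h(k) = h_k∘...∘h_1. -/
open Filter Metric Set Bornology

noncomputable section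

/-- The non-autonomous composition `h(k) = h_k ∘ ⋯ ∘ h_1` (with `h(0) = id`). -/
def compSeq (h : ℕ → ℂ × ℂ → ℂ × ℂ) : ℕ → ℂ × ℂ → ℂ × ℂ
  | 0 => id
  | k + 1 => h (k + 1) ∘ compSeq h k

lemma IsGenHenonDeg.continuous' {h : ℂ × ℂ → ℂ × ℂ} {d : ℕ}
    (H : IsGenHenonDeg h d) : Continuous h := by
  obtain ⟨a, p, -, -, -, hf⟩ := H
  have : h = fun z => (z.2, p.eval z.2 - a * z.1) := by
    funext z; rw [← hf z.1 z.2]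
  rw [this]; fun_prop

lemma continuous_foldr_comp : ∀ l : List (ℂ × ℂ → ℂ × ℂ),
    (∀ f ∈ l, Continuous f) → Continuous (l.foldr (· ∘ ·) id)
  | [], _ => continuous_id
  | f :: l, hl => by
      simp only [List.foldr]
      exact (hl f (by simp)).comp
        (continuous_foldr_comp l fun g hg => hl g (by simp [hg]))

lemma IsHenon.continuous' {h : ℂ × ℂ → ℂ × ℂ} (H : IsHenon h) : Continuous h := by
  obtain ⟨d, l, -, hall, hcomp, -⟩ := H
  rw [hcomp]
  exact continuous_foldr_comp _ (by
    intro f hf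
    obtain ⟨gd, hgd, rfl⟩ := List.mem_map.mp hf
    exact (hall gd hgd).continuous')

/-- if `{h_k}` is a sequence of Hénon maps drawn from a finite set,
each contracting by factor `α < 1` on `B(0;r)`, and `K` is a compact subset of the
non-autonomous basin `Ω_h` of the origin, then there is `N₀(K) ≥ 1` so that for
all `k ≥ N₀(K)`, `K` lies in the attracting basin of the single map
`h(k) = h_k ∘ ⋯ ∘ h_1`. -/
theorem compact_in_autonomous_basins (n : ℕ) (hn : 0 < n)
    (Hgen : Fin n → ℂ × ℂ → ℂ × ℂ) (hHenon : ∀ i, IsHenon (Hgen i))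
    (r α : ℝ) (hr : 0 < r) (hα0 : 0 < α) (hα1 : α < 1)
    (hattr : ∀ i, ∀ z ∈ Metric.ball (0 : ℂ × ℂ) r, ‖Hgen i z‖ ≤ α * ‖z‖)
    (h : ℕ → ℂ × ℂ → ℂ × ℂ) (hmem : ∀ k, ∃ i, h k = Hgen i)
    (K : Set (ℂ × ℂ)) (hK : IsCompact K)
    (hKΩ : K ⊆ {z | Tendsto (fun k => compSeq h k z) atTop (nhds 0)}) :
    ∃ N₀ : ℕ, 1 ≤ N₀ ∧ ∀ k ≥ N₀,
      K ⊆ {z | Tendsto (fun m => (compSeq h k)^[m] z) atTop (nhds 0)} := by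

  -- basic facts
  have hcont : ∀ k, Continuous (compSeq h k) := by
    intro k
    induction k with
    | zero => exact continuous_id
    | succ k ih =>
        obtain ⟨i, hi⟩ := hmem (k + 1)
        exact ((hi ▸ (hHenon i).continuous') : Continuous (h (k+1))).comp ih
  have hstep : ∀ j, ∀ w ∈ Metric.ball (0 : ℂ × ℂ) r,
      ‖h j w‖ ≤ α * ‖w‖ ∧ h j w ∈ Metric.ball (0 : ℂ × ℂ) r := by
    intro j w hw
    obtain ⟨i, hi⟩ := hmem j
    have h1 : ‖h j w‖ ≤ α * ‖w‖ := hi ▸ hattr i w hw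
    refine ⟨h1, ?_⟩
    rw [mem_ball_zero_iff] at hw ⊢
    calc ‖h j w‖ ≤ α * ‖w‖ := h1
      _ < 1 * r := by
          apply mul_lt_mul' hα1.le hw (norm_nonneg w) one_pos
      _ = r := one_mul r
  have hcontr : ∀ k, ∀ w ∈ Metric.ball (0 : ℂ × ℂ) r,
      ‖compSeq h k w‖ ≤ α ^ k * ‖w‖ ∧ compSeq h k w ∈ Metric.ball (0 : ℂ × ℂ) r := by
    intro k
    induction k with
    | zero => intro w hw; simpa [compSeq] using hw
    | succ k ih =>
        intro w hw
        obtain ⟨h1, h2⟩ := ih w hw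
        obtain ⟨h3, h4⟩ := hstep (k + 1) _ h2
        refine ⟨?_, h4⟩
        calc ‖compSeq h (k+1) w‖ = ‖h (k+1) (compSeq h k w)‖ := rfl
          _ ≤ α * ‖compSeq h k w‖ := h3
          _ ≤ α * (α ^ k * ‖w‖) := by
              exact mul_le_mul_of_nonneg_left h1 hα0.le
          _ = α ^ (k + 1) * ‖w‖ := by ring
  have hprop : ∀ z N, compSeq h N z ∈ Metric.ball (0 : ℂ × ℂ) r →
      ∀ k, N ≤ k → compSeq h k z ∈ Metric.ball (0 : ℂ × ℂ) r := by
    intro z N hz k hk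
    induction k, hk using Nat.le_induction with
    | base => exact hz
    | succ k hk ih => exact (hstep (k + 1) _ ih).2
  -- choose, for each point, a time when the orbit enters the ball
  classical
  set N : ℂ × ℂ → ℕ := fun z =>
    if hz : ∃ m, compSeq h m z ∈ Metric.ball (0 : ℂ × ℂ) r then hz.choose else 0
    with hNdef
  have hNspec : ∀ z ∈ K, compSeq h (N z) z ∈ Metric.ball (0 : ℂ × ℂ) r := by
    intro z hz
    have hex : ∃ m, compSeq h m z ∈ Metric.ball (0 : ℂ × ℂ) r :=
      ((hKΩ hz).eventually_mem (Metric.ball_mem_nhds 0 hr)).exists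
    simp only [hNdef, dif_pos hex]
    exact hex.choose_spec
  -- cover K
  have hcover := hK.elim_nhds_subcover
    (fun z => (compSeq h (N z)) ⁻¹' Metric.ball (0 : ℂ × ℂ) r)
    (fun z hz => ((hcont (N z)).isOpen_preimage _ Metric.isOpen_ball).mem_nhds
      (hNspec z hz))
  obtain ⟨t, -, ht⟩ := hcover
  refine ⟨max 1 (t.sup N), le_max_left _ _, ?_⟩
  intro k hk z hz
  obtain ⟨x, hxt, hx⟩ := Set.mem_iUnion₂.mp (ht hz)
  have hk1 : 1 ≤ k := le_trans (le_max_left _ _) hk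
  have hkN : N x ≤ k :=
    le_trans (Finset.le_sup hxt) (le_trans (le_max_right _ _) hk)
  -- compSeq h k z ∈ ball
  have hball : compSeq h k z ∈ Metric.ball (0 : ℂ × ℂ) r := hprop z (N x) hx k hkN
  -- iterates of g := compSeq h k contract the ball
  set g := compSeq h k with hg
  have hgcontr : ∀ w ∈ Metric.ball (0 : ℂ × ℂ) r,
      ‖g w‖ ≤ α * ‖w‖ ∧ g w ∈ Metric.ball (0 : ℂ × ℂ) r := by
    intro w hw
    obtain ⟨h1, h2⟩ := hcontr k w hw
    refine ⟨le_trans h1 (mul_le_mul_of_nonneg_right ?_ (norm_nonneg w)), h2⟩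
    calc α ^ k ≤ α ^ 1 := pow_le_pow_of_le_one hα0.le hα1.le hk1
      _ = α := pow_one α
  have hiter : ∀ m, ‖g^[m + 1] z‖ ≤ α ^ m * ‖g z‖ ∧
      g^[m + 1] z ∈ Metric.ball (0 : ℂ × ℂ) r := by
    intro m
    induction m with
    | zero => simpa using hball
    | succ m ih =>
        obtain ⟨h1, h2⟩ := ih
        obtain ⟨h3, h4⟩ := hgcontr _ h2
        have : g^[m + 2] z = g (g^[m + 1] z) := Function.iterate_succ_apply' g _ z
        rw [this]
        refine ⟨?_, h4⟩
        calc ‖g (g^[m+1] z)‖ ≤ α * ‖g^[m+1] z‖ := h3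
          _ ≤ α * (α ^ m * ‖g z‖) := mul_le_mul_of_nonneg_left h1 hα0.le
          _ = α ^ (m + 1) * ‖g z‖ := by ring
  -- conclude convergence
  rw [Set.mem_setOf_eq]
  rw [← tendsto_add_atTop_iff_nat 1]
  rw [tendsto_zero_iff_norm_tendsto_zero]
  apply squeeze_zero (fun m => norm_nonneg _) (fun m => (hiter m).1)
  have : Tendsto (fun m : ℕ => α ^ m) atTop (nhds 0) :=
    tendsto_pow_atTop_nhds_zero_of_lt_one hα0.le hα1
  simpa using this.mul_const ‖g z‖
end
end
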